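/- Let ζ = 54^{1/2} · 72^{1/4} · 108^{1/6} · 216^{1/12} and g = (log₂ 9, log₂ 9, log₂ 6, log₂ ζ, log₂ 54, log₂ 54, log₂ 216) ∈ ℝ^7. There do not exist λ_1, λ_2, λ_3, λ_{12}, λ_{123'} ≥ 0 with g = λ_1·e_1 + λ_2·e_2 + λ_3·e_3 + λ_{12}·e_{12} + λ_{123'}·e_{123'} satisfying either λ_{12} + λ_{123'} ≥ log₂ ⌈2^{λ_{123'}}⌉ or λ_{123'} = log₂ m for some positive integer m. (Indeed the unique representation has λ_{123'} = log₂(ζ/36) with 2 < ζ/36 < 3 and ζ/36 not an integer, and λ_{12} + λ_{123'} = log₂(9/4) < log₂ 3 = log₂ ⌈2^{λ_{123'}}⌉.) -/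

import Mathlib

open Finset

/-- Probability that the discrete random variable `X` (on finite sample space `Fin N`
with probability mass function `p`) takes the value `a`. -/
noncomputable def pr {N : ℕ} (p : Fin N → ℝ) {A : Type} [DecidableEq A]
    (X : Fin N → A) (a : A) : ℝ :=
  ∑ ω, if X ω = a then p ω else 0

/-- Base-2 Shannon entropy of the random variable `X` under the pmf `p`. -/
noncomputable def ent {N : ℕ} (p : Fin N → ℝ) {A : Type} [Fintype A] [DecidableEq A]
    (X : Fin N → A) : ℝ :=
  -∑ a, pr p X a * Real.logb 2 (pr p X a)

/-- `p` is a probability mass function. -/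
def IsDist {N : ℕ} (p : Fin N → ℝ) : Prop :=
  (∀ ω, 0 ≤ p ω) ∧ ∑ ω, p ω = 1

/-- The entropy vector of three finite-alphabet random variables, with components
(H(X₁), H(X₂), H(X₃), H(X₁X₂), H(X₁X₃), H(X₂X₃), H(X₁X₂X₃)). -/
noncomputable def entVec3 {N a₁ a₂ a₃ : ℕ} (p : Fin N → ℝ)
    (X₁ : Fin N → Fin a₁) (X₂ : Fin N → Fin a₂) (X₃ : Fin N → Fin a₃) : Fin 7 → ℝ :=
  ![ent p X₁, ent p X₂, ent p X₃,
    ent p (fun ω => (X₁ ω, X₂ ω)),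
    ent p (fun ω => (X₁ ω, X₃ ω)),
    ent p (fun ω => (X₂ ω, X₃ ω)),
    ent p (fun ω => (X₁ ω, X₂ ω, X₃ ω))]

/-- `h ∈ ℝ⁷` is the entropy vector of some triple of finite-alphabet random variables. -/
def IsEntropic (h : Fin 7 → ℝ) : Prop :=
  ∃ (N a₁ a₂ a₃ : ℕ) (p : Fin N → ℝ)
    (X₁ : Fin N → Fin a₁) (X₂ : Fin N → Fin a₂) (X₃ : Fin N → Fin a₃),
    IsDist p ∧ entVec3 p X₁ X₂ X₃ = h

noncomputable def e1 : Fin 7 → ℝ := ![1,0,0,1,1,0,1]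
noncomputable def e2 : Fin 7 → ℝ := ![0,1,0,1,0,1,1]
noncomputable def e3 : Fin 7 → ℝ := ![0,0,1,0,1,1,1]
noncomputable def e12 : Fin 7 → ℝ := ![1,1,0,1,1,1,1]
noncomputable def e13 : Fin 7 → ℝ := ![1,0,1,1,1,1,1]
noncomputable def e23 : Fin 7 → ℝ := ![0,1,1,1,1,1,1]
noncomputable def e123 : Fin 7 → ℝ := ![1,1,1,1,1,1,1]
noncomputable def e123' : Fin 7 → ℝ := ![1,1,1,2,2,2,2]

noncomputable def zeta : ℝ :=
  (54:ℝ) ^ ((1:ℝ)/2) * (72:ℝ) ^ ((1:ℝ)/4) * (108:ℝ) ^ ((1:ℝ)/6) * (216:ℝ) ^ ((1:ℝ)/12)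

noncomputable def g : Fin 7 → ℝ :=
  ![Real.logb 2 9, Real.logb 2 9, Real.logb 2 6, Real.logb 2 zeta,
    Real.logb 2 54, Real.logb 2 54, Real.logb 2 216]

/-!
Coordinates 2, 3, 6 and 0, 5, 6 of the representation force `λ₁₂₃' = log₂ (ζ / 36)` and
`λ₁₂ + λ₁₂₃' = log₂ (9 / 4)`. Since `(ζ / 36) ^ 12 = 3 ^ 9 / 4` lies strictly between `2 ^ 12` and
`3 ^ 12`, the number `2 ^ λ₁₂₃' = ζ / 36` is not an integer and has ceiling `3 > 9 / 4`.
-/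

lemma coeffs_of_eq_combination {h : Fin 7 → ℝ} {l1 l2 l3 l12 l : ℝ}
    (heq : h = l1 • e1 + l2 • e2 + l3 • e3 + l12 • e12 + l • e123') :
    l = h 2 + h 3 - h 6 ∧ l12 + l = h 0 + h 5 - h 6 := by
  have h0 := congrFun heq 0
  have h2 := congrFun heq 2
  have h3 := congrFun heq 3
  have h5 := congrFun heq 5
  have h6 := congrFun heq 6
  simp only [Pi.add_apply, Pi.smul_apply, smul_eq_mul, e1, e2, e3, e12, e123', Matrix.cons_val]
    at h0 h2 h3 h5 h6
  constructor <;> linarith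

lemma zeta_pos : 0 < zeta := by unfold zeta; positivity

lemma rpow_pow_of_mul_eq {a r : ℝ} {k n : ℕ} (ha : 0 ≤ a) (h : r * k = n) :
    (a ^ r) ^ k = a ^ n := by
  rw [← Real.rpow_natCast, ← Real.rpow_mul ha, h, Real.rpow_natCast]

lemma zeta_pow_twelve : zeta ^ 12 = 54 ^ 6 * 72 ^ 3 * 108 ^ 2 * 216 := by
  simp only [zeta, mul_pow]
  rw [rpow_pow_of_mul_eq (n := 6) (by norm_num) (by norm_num),
    rpow_pow_of_mul_eq (n := 3) (by norm_num) (by norm_num),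
    rpow_pow_of_mul_eq (n := 2) (by norm_num) (by norm_num),
    rpow_pow_of_mul_eq (n := 1) (by norm_num) (by norm_num), pow_one]

lemma zeta_div_36_mem_Ioo : zeta / 36 ∈ Set.Ioo 2 3 := by
  have hpow : (zeta / 36) ^ 12 = 3 ^ 9 / 4 := by
    rw [div_pow, zeta_pow_twelve]; norm_num
  have hnn : 0 ≤ zeta / 36 := (div_pos zeta_pos (by norm_num)).le
  constructor
  · exact lt_of_pow_lt_pow_left₀ 12 hnn (by rw [hpow]; norm_num)
  · exact lt_of_pow_lt_pow_left₀ 12 (by norm_num) (by rw [hpow]; norm_num)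

lemma g_two_add_g_three_sub_g_six : g 2 + g 3 - g 6 = Real.logb 2 (zeta / 36) := by
  simp only [g, Matrix.cons_val]
  rw [show zeta / 36 = 6 * zeta / 216 by ring,
    Real.logb_div (mul_pos (by norm_num) zeta_pos).ne' (by norm_num),
    Real.logb_mul (by norm_num) zeta_pos.ne']

lemma g_zero_add_g_five_sub_g_six : g 0 + g 5 - g 6 = Real.logb 2 (9 / 4) := by
  simp only [g, Matrix.cons_val]
  rw [show (9 / 4 : ℝ) = 9 * 54 / 216 by norm_num, Real.logb_div (by norm_num) (by norm_num),
    Real.logb_mul (by norm_num) (by norm_num)]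

/-- There is no nonnegative representation of g in e₁,e₂,e₃,e₁₂,e₁₂₃' satisfying
either λ₁₂+λ₁₂₃' ≥ log₂⌈2^{λ₁₂₃'}⌉ or λ₁₂₃' = log₂ m for a positive integer m. -/
theorem stmt14 :
    ¬∃ l1 l2 l3 l12 l : ℝ, 0 ≤ l1 ∧ 0 ≤ l2 ∧ 0 ≤ l3 ∧ 0 ≤ l12 ∧ 0 ≤ l ∧
      g = l1 • e1 + l2 • e2 + l3 • e3 + l12 • e12 + l • e123' ∧
      (l12 + l ≥ Real.logb 2 ((⌈(2:ℝ) ^ l⌉ : ℤ) : ℝ) ∨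
       ∃ m : ℕ, 0 < m ∧ l = Real.logb 2 (m : ℝ)) := by
  rintro ⟨l1, l2, l3, l12, l, -, -, -, -, -, hg, hbound⟩
  obtain ⟨hl, hsum⟩ := coeffs_of_eq_combination hg
  rw [g_two_add_g_three_sub_g_six] at hl
  rw [g_zero_add_g_five_sub_g_six] at hsum
  obtain ⟨hlo, hhi⟩ := zeta_div_36_mem_Ioo
  have h2l : (2 : ℝ) ^ l = zeta / 36 := by
    rw [hl, Real.rpow_logb (by norm_num) (by norm_num) (by linarith)]
  rcases hbound with hceil | ⟨m, hm, hlm⟩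
  · have hceil3 : ⌈(2 : ℝ) ^ l⌉ = 3 := by
      rw [h2l, Int.ceil_eq_iff]
      constructor <;> push_cast <;> linarith
    rw [hceil3, hsum] at hceil
    push_cast at hceil
    exact hceil.not_gt (Real.logb_lt_logb (by norm_num) (by norm_num) (by norm_num))
  · rw [hlm, Real.rpow_logb (by norm_num) (by norm_num) (by exact_mod_cast hm)] at h2l
    rw [← h2l] at hlo hhi
    have h2m : 2 < m := by exact_mod_cast hlo
    have hm3 : m < 3 := by exact_mod_cast hhi
    omega
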